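/- Let U, V : (0,1] → ℝ be differentiable functions satisfying U'(t) + (λ0/t) U(t) = V(t) for all t in (0,1], with λ > λ0. Then for all t in (0,1]: (t^λ U(t))^2 + (λ - λ0) ∫_t^1 s^{2λ-1} U(s)^2 ds ≤ U(1)^2 + (1/(λ-λ0)) ∫_t^1 s^{2λ+1} V(s)^2 ds. -/

import Mathlib

/-!
With `c = λ - λ0`, the ODE gives `d/ds (s^λ U)² = 2c s^{2λ-1} U² + 2 s^{2λ} U V`, and Young's
inequality `2 s^{2λ} U V ≥ -(c s^{2λ-1} U² + c⁻¹ s^{2λ+1} V²)` bounds this derivative below by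
`c s^{2λ-1} U² - c⁻¹ s^{2λ+1} V²`. Integrating from `t` to `1` gives the estimate.
-/

open MeasureTheory Set

section

variable {U V : ℝ → ℝ} {lam lam0 : ℝ}

theorem hasDerivAt_sq_rpow_mul_of_hasDerivAt {x : ℝ} (hx : 0 < x)
    (hU : HasDerivAt U (V x - lam0 / x * U x) x) :
    HasDerivAt (fun s => (s ^ lam * U s) ^ 2)
      (2 * (lam - lam0) * (x ^ (2 * lam - 1) * U x ^ 2) + 2 * (x ^ (2 * lam) * (U x * V x))) x := by
  refine (((Real.hasDerivAt_rpow_const (p := lam) (Or.inl hx.ne')).mul hU).pow 2).congr_deriv ?_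
  simp only [Pi.mul_apply]
  have hsq : x ^ (2 * lam) = (x ^ lam) ^ 2 := by
    rw [← Real.rpow_natCast, ← Real.rpow_mul hx.le, mul_comm]; norm_num
  rw [Real.rpow_sub_one hx.ne', Real.rpow_sub_one hx.ne', hsq]
  field_simp
  ring

theorem neg_add_le_two_mul_rpow_mul_mul {c x : ℝ} (hc : 0 < c) (hx : 0 < x) (u v : ℝ) :
    -(c * (x ^ (2 * lam - 1) * u ^ 2) + 1 / c * (x ^ (2 * lam + 1) * v ^ 2))
      ≤ 2 * (x ^ (2 * lam) * (u * v)) := by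
  have hyoung := two_mul_le_add_mul_sq (a := u) (b := -v) (div_pos hc hx)
  rw [inv_div] at hyoung
  have := mul_le_mul_of_nonneg_left hyoung (Real.rpow_nonneg hx.le (2 * lam))
  rw [Real.rpow_sub_one hx.ne', Real.rpow_add_one hx.ne']
  field_simp at this ⊢
  nlinarith [this]

theorem sq_rpow_mul_add_integral_le {a b : ℝ} (hlam : lam0 < lam) (ha : 0 < a) (hab : a ≤ b)
    (hode : ∀ x ∈ Icc a b, HasDerivAt U (V x - lam0 / x * U x) x)
    (hV : IntervalIntegrable (fun s => s ^ (2 * lam + 1) * V s ^ 2) volume a b) :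
    (a ^ lam * U a) ^ 2 + (lam - lam0) * ∫ s in a..b, s ^ (2 * lam - 1) * U s ^ 2
      ≤ (b ^ lam * U b) ^ 2 + 1 / (lam - lam0) * ∫ s in a..b, s ^ (2 * lam + 1) * V s ^ 2 := by
  have hc : 0 < lam - lam0 := sub_pos.2 hlam
  have hpos : ∀ x ∈ Icc a b, 0 < x := fun x hx => ha.trans_le hx.1
  have hderiv := fun x hx =>
    hasDerivAt_sq_rpow_mul_of_hasDerivAt (lam := lam) (hpos x hx) (hode x hx)
  have hUint : IntervalIntegrable (fun s => s ^ (2 * lam - 1) * U s ^ 2) volume a b := by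
    refine ContinuousOn.intervalIntegrable fun x hx => ?_
    rw [uIcc_of_le hab] at hx
    exact (((Real.continuousAt_rpow_const _ _ (Or.inl (hpos x hx).ne')).mul
      ((hode x hx).continuousAt.pow 2))).continuousWithinAt
  have hφint := (hUint.const_mul (lam - lam0)).sub (hV.const_mul (1 / (lam - lam0)))
  have hftc := intervalIntegral.integral_le_sub_of_hasDeriv_right_of_le hab
    (fun x hx => (hderiv x hx).continuousAt.continuousWithinAt)
    (fun x hx => (hderiv x (Ioo_subset_Icc_self hx)).hasDerivWithinAt)
    ((intervalIntegrable_iff_integrableOn_Icc_of_le hab).1 hφint)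
    (fun x hx => by
      linarith [neg_add_le_two_mul_rpow_mul_mul (lam := lam) hc
        (hpos x (Ioo_subset_Icc_self hx)) (U x) (V x)])
  rw [intervalIntegral.integral_sub (hUint.const_mul _) (hV.const_mul _),
    intervalIntegral.integral_const_mul, intervalIntegral.integral_const_mul] at hftc
  linarith

end

open MeasureTheory intervalIntegral Set in
theorem stmt_3_general (U V : ℝ → ℝ) (lam lam0 : ℝ) (hlam : lam0 < lam)
    (hode : ∀ t ∈ Set.Ioc (0:ℝ) 1, HasDerivAt U (V t - lam0 / t * U t) t)
    (hV2 : ∀ t ∈ Set.Ioc (0:ℝ) 1,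
      IntervalIntegrable (fun s : ℝ => s ^ (2 * lam + 1) * (V s) ^ 2) volume t 1) :
    ∀ t ∈ Set.Ioc (0:ℝ) 1,
      (t ^ lam * U t) ^ 2
          + (lam - lam0) * ∫ s in t..1, s ^ (2 * lam - 1) * (U s) ^ 2
        ≤ (U 1) ^ 2 + (1 / (lam - lam0)) * ∫ s in t..1, s ^ (2 * lam + 1) * (V s) ^ 2 := by
  intro t ht
  simpa using sq_rpow_mul_add_integral_le hlam ht.1 ht.2
    (fun x hx => hode x ⟨ht.1.trans_le hx.1, hx.2⟩) (hV2 t ht)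

open MeasureTheory intervalIntegral Set in
/-- Evolution lemma: if `U' + (λ0/t) U = V` on `(0,1]` and `λ > λ0`, then
`(t^λ U(t))² + (λ-λ0) ∫_t^1 s^{2λ-1} U(s)² ds
  ≤ U(1)² + (1/(λ-λ0)) ∫_t^1 s^{2λ+1} V(s)² ds`, the integrals being assumed to exist. -/
theorem stmt_3 (U V : ℝ → ℝ) (lam lam0 : ℝ) (hlam : lam0 < lam)
    (hode : ∀ t ∈ Set.Ioc (0:ℝ) 1, HasDerivAt U (V t - lam0 / t * U t) t)
    (hU2 : ∀ t ∈ Set.Ioc (0:ℝ) 1,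
      IntervalIntegrable (fun s : ℝ => s ^ (2 * lam - 1) * (U s) ^ 2) volume t 1)
    (hV2 : ∀ t ∈ Set.Ioc (0:ℝ) 1,
      IntervalIntegrable (fun s : ℝ => s ^ (2 * lam + 1) * (V s) ^ 2) volume t 1) :
    ∀ t ∈ Set.Ioc (0:ℝ) 1,
      (t ^ lam * U t) ^ 2
          + (lam - lam0) * ∫ s in t..1, s ^ (2 * lam - 1) * (U s) ^ 2
        ≤ (U 1) ^ 2 + (1 / (lam - lam0)) * ∫ s in t..1, s ^ (2 * lam + 1) * (V s) ^ 2 :=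
  stmt_3_general U V lam lam0 hlam hode hV2
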